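/- Let u, v ∈ V, let η : V → ℝ satisfy 0 ≤ η w ≤ 1 for all w ∈ V, and let εₕ satisfy 0 < εₕ ≤ 1. Define s = ∑_{ℓ=0}^{∞} ∑_{w ∈ V} h ℓ u w · η w · h ℓ v w, and define s' = ∑_{ℓ=0}^{∞} ∑_{w ∈ V with h ℓ u w ≥ εₕ} h ℓ u w · η w · h ℓ v w (both series are summable over ℓ). Then s − √c·εₕ/(1 − √c) ≤ s' ≤ s. (This is Lemma 1: restricting the SLING decomposition of SimRank to attention nodes loses at most √c·εₕ/(1 − √c).) -/

import Mathlib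

/-!
The `√c`-walk is substochastic: its level-`ℓ` mass is at most `√c ^ ℓ`, so every hitting
probability lies in `[0, √c ^ ℓ] ⊆ [0, 1]` and the level-`ℓ` SLING term is at most `√c ^ ℓ`.
Restricting level `ℓ` to the attention nodes of `u` drops only nodes with `h ℓ u w < εₕ`, which
costs at most `εₕ · ∑_w h ℓ v w ≤ εₕ √c ^ ℓ`; on level `0` nothing is lost because all the mass
of `u` sits on `u` itself and `εₕ ≤ 1`. Summing the geometric bound over `ℓ ≥ 1` gives
`√c εₕ / (1 - √c)`.
-/

open Finset

section Walk

variable {V : Type*} [Fintype V] [DecidableEq V] {I : V → Finset V} {c : ℝ}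
  {h : ℕ → V → V → ℝ}

theorem hitting_nonneg (h0 : ∀ u w, h 0 u w = if w = u then 1 else 0)
    (hrec : ∀ ℓ u w, h (ℓ + 1) u w =
      ∑ v ∈ univ.filter (fun v => w ∈ I v), (√c / (I v).card) * h ℓ u v)
    (ℓ : ℕ) (u w : V) : 0 ≤ h ℓ u w := by
  induction ℓ generalizing w with
  | zero => rw [h0]; positivity
  | succ ℓ ih =>
    rw [hrec]
    exact sum_nonneg fun v _ => mul_nonneg (by positivity) (ih v)

theorem sum_hitting_le (h0 : ∀ u w, h 0 u w = if w = u then 1 else 0)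
    (hrec : ∀ ℓ u w, h (ℓ + 1) u w =
      ∑ v ∈ univ.filter (fun v => w ∈ I v), (√c / (I v).card) * h ℓ u v)
    (ℓ : ℕ) (u : V) : ∑ w, h ℓ u w ≤ √c ^ ℓ := by
  induction ℓ with
  | zero => simp [h0]
  | succ ℓ ih =>
    have hstep : ∀ v, (I v).card * (√c / (I v).card) ≤ √c := fun v => by
      rcases Nat.eq_zero_or_pos (I v).card with hv | hv
      · simp [hv]
      · rw [mul_div_cancel₀ _ (by positivity)]
    calc ∑ w, h (ℓ + 1) u w
        = ∑ v, (I v).card * (√c / (I v).card) * h ℓ u v := by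
          simp only [hrec, sum_filter]
          rw [sum_comm]
          refine sum_congr rfl fun v _ => ?_
          rw [sum_ite_mem, univ_inter, sum_const, nsmul_eq_mul, mul_assoc]
      _ ≤ ∑ v, √c * h ℓ u v :=
          sum_le_sum fun v _ => mul_le_mul_of_nonneg_right (hstep v) (hitting_nonneg h0 hrec ℓ u v)
      _ ≤ √c ^ (ℓ + 1) := by
          rw [← mul_sum, pow_succ']
          exact mul_le_mul_of_nonneg_left ih (Real.sqrt_nonneg c)

theorem hitting_le (h0 : ∀ u w, h 0 u w = if w = u then 1 else 0)
    (hrec : ∀ ℓ u w, h (ℓ + 1) u w =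
      ∑ v ∈ univ.filter (fun v => w ∈ I v), (√c / (I v).card) * h ℓ u v)
    (ℓ : ℕ) (u w : V) : h ℓ u w ≤ √c ^ ℓ :=
  (single_le_sum (fun x _ => hitting_nonneg h0 hrec ℓ u x) (mem_univ w)).trans
    (sum_hitting_le h0 hrec ℓ u)

theorem hitting_zero_sum_sub_sum_filter_eq_zero (h0 : ∀ u w, h 0 u w = if w = u then 1 else 0)
    (u : V) (η q : V → ℝ) {ε : ℝ} (hε : ε ≤ 1) :
    ∑ w, h 0 u w * η w * q w - ∑ w ∈ univ.filter (fun w => ε ≤ h 0 u w), h 0 u w * η w * q w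
      = 0 := by
  rw [← sum_filter_add_sum_filter_not univ (fun w => ε ≤ h 0 u w), add_sub_cancel_left]
  refine sum_eq_zero fun w hw => ?_
  rw [mem_filter, h0] at hw
  have hwu : w ≠ u := by
    rintro rfl
    exact hw.2 (by simpa using hε)
  simp [h0, hwu]

end Walk

section Truncation

variable {V : Type*} [Fintype V] {p q η : V → ℝ}

theorem sum_mul_mul_le_sum (hp : ∀ w, 0 ≤ p w) (hη : ∀ w, 0 ≤ η w ∧ η w ≤ 1)
    (hq : ∀ w, 0 ≤ q w ∧ q w ≤ 1) : ∑ w, p w * η w * q w ≤ ∑ w, p w :=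
  sum_le_sum fun w _ => by
    have hηq : η w * q w ≤ 1 := mul_le_one₀ (hη w).2 (hq w).1 (hq w).2
    simpa [mul_assoc] using mul_le_mul_of_nonneg_left hηq (hp w)

theorem sum_sub_sum_filter_le {ε : ℝ} (hε : 0 ≤ ε)
    (hη : ∀ w, 0 ≤ η w ∧ η w ≤ 1) (hq : ∀ w, 0 ≤ q w) :
    ∑ w, p w * η w * q w - ∑ w ∈ univ.filter (fun w => ε ≤ p w), p w * η w * q w
      ≤ ε * ∑ w, q w := by
  rw [← sum_filter_add_sum_filter_not univ (fun w => ε ≤ p w), add_sub_cancel_left, mul_sum]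
  calc ∑ w ∈ univ.filter (fun w => ¬ε ≤ p w), p w * η w * q w
      ≤ ∑ w ∈ univ.filter (fun w => ¬ε ≤ p w), ε * q w := by
        refine sum_le_sum fun w hw => mul_le_mul_of_nonneg_right ?_ (hq w)
        have hpw : p w < ε := not_le.mp (mem_filter.mp hw).2
        nlinarith [hη w]
    _ ≤ ∑ w, ε * q w :=
        sum_le_sum_of_subset_of_nonneg (filter_subset _ _) fun w _ _ => mul_nonneg hε (hq w)

end Truncation

theorem tsum_le_of_le_geometric_succ {d : ℕ → ℝ} {r ε : ℝ} (hd : Summable d) (hd0 : d 0 ≤ 0)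
    (hr0 : 0 ≤ r) (hr1 : r < 1) (hle : ∀ ℓ, d (ℓ + 1) ≤ ε * r ^ (ℓ + 1)) :
    ∑' ℓ, d ℓ ≤ r * ε / (1 - r) := by
  have hgeo : Summable fun ℓ : ℕ => ε * r * r ^ ℓ :=
    (summable_geometric_of_lt_one hr0 hr1).mul_left _
  calc ∑' ℓ, d ℓ = d 0 + ∑' ℓ, d (ℓ + 1) := hd.tsum_eq_zero_add
    _ ≤ 0 + ∑' ℓ : ℕ, ε * r * r ^ ℓ := by
        refine add_le_add hd0 (Summable.tsum_le_tsum (fun ℓ => (hle ℓ).trans_eq (by ring))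
          (hd.comp_injective (add_left_injective 1)) hgeo)
    _ = r * ε / (1 - r) := by
        rw [zero_add, tsum_mul_left, tsum_geometric_of_lt_one hr0 hr1]
        ring

theorem stmt_8_general {V : Type*} [Fintype V] [DecidableEq V]
    (I : V → Finset V)
    (c : ℝ) (hc1 : c < 1)
    (h : ℕ → V → V → ℝ)
    (h0 : ∀ u w, h 0 u w = if w = u then 1 else 0)
    (hrec : ∀ ℓ u w, h (ℓ + 1) u w =
      ∑ v ∈ Finset.univ.filter (fun v => w ∈ I v),
        (Real.sqrt c / (I v).card) * h ℓ u v)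
    (u v : V) (η : V → ℝ) (hη : ∀ w, 0 ≤ η w ∧ η w ≤ 1)
    (εh : ℝ) (hεh0 : 0 < εh) (hεh1 : εh ≤ 1) :
    Summable (fun ℓ : ℕ => ∑ w, h ℓ u w * η w * h ℓ v w) ∧
    Summable (fun ℓ : ℕ => ∑ w ∈ Finset.univ.filter (fun w => εh ≤ h ℓ u w),
        h ℓ u w * η w * h ℓ v w) ∧
    (∑' ℓ : ℕ, ∑ w, h ℓ u w * η w * h ℓ v w) -
        Real.sqrt c * εh / (1 - Real.sqrt c) ≤
      ∑' ℓ : ℕ, ∑ w ∈ Finset.univ.filter (fun w => εh ≤ h ℓ u w),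
        h ℓ u w * η w * h ℓ v w ∧
    (∑' ℓ : ℕ, ∑ w ∈ Finset.univ.filter (fun w => εh ≤ h ℓ u w),
        h ℓ u w * η w * h ℓ v w) ≤
      ∑' ℓ : ℕ, ∑ w, h ℓ u w * η w * h ℓ v w := by
  have hsc : √c < 1 := (Real.sqrt_lt' one_pos).2 (by simpa using hc1)
  have hnn := hitting_nonneg h0 hrec
  have hunit : ∀ ℓ w, 0 ≤ h ℓ v w ∧ h ℓ v w ≤ 1 := fun ℓ w =>
    ⟨hnn ℓ v w, (hitting_le h0 hrec ℓ v w).trans (pow_le_one₀ (Real.sqrt_nonneg c) hsc.le)⟩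
  have hterm : ∀ ℓ w, 0 ≤ h ℓ u w * η w * h ℓ v w := fun ℓ w =>
    mul_nonneg (mul_nonneg (hnn ℓ u w) (hη w).1) (hnn ℓ v w)
  have hf : ∀ ℓ, ∑ w, h ℓ u w * η w * h ℓ v w ≤ √c ^ ℓ := fun ℓ =>
    (sum_mul_mul_le_sum (hnn ℓ u) hη (hunit ℓ)).trans (sum_hitting_le h0 hrec ℓ u)
  have hgf : ∀ ℓ, ∑ w ∈ univ.filter (fun w => εh ≤ h ℓ u w), h ℓ u w * η w * h ℓ v w
      ≤ ∑ w, h ℓ u w * η w * h ℓ v w := fun ℓ =>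
    sum_le_sum_of_subset_of_nonneg (filter_subset _ _) fun w _ _ => hterm ℓ w
  have hgeo := summable_geometric_of_lt_one (Real.sqrt_nonneg c) hsc
  have hfs := Summable.of_nonneg_of_le (fun ℓ => sum_nonneg fun w _ => hterm ℓ w) hf hgeo
  have hgs := Summable.of_nonneg_of_le (fun ℓ => sum_nonneg fun w _ => hterm ℓ w)
    (fun ℓ => (hgf ℓ).trans (hf ℓ)) hgeo
  refine ⟨hfs, hgs, ?_, hgs.tsum_le_tsum hgf hfs⟩
  have hloss := tsum_le_of_le_geometric_succ (hfs.sub hgs)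
    (hitting_zero_sum_sub_sum_filter_eq_zero h0 u η (h 0 v) hεh1).le (Real.sqrt_nonneg c) hsc
    fun ℓ => (sum_sub_sum_filter_le hεh0.le hη (hnn _ v)).trans
      (mul_le_mul_of_nonneg_left (sum_hitting_le h0 hrec _ v) hεh0.le)
  rw [hfs.tsum_sub hgs] at hloss
  linarith

theorem stmt_8 {V : Type*} [Fintype V] [DecidableEq V]
    (I : V → Finset V) (hI : ∀ v, (I v).Nonempty)
    (c : ℝ) (hc0 : 0 < c) (hc1 : c < 1)
    (h : ℕ → V → V → ℝ)
    (h0 : ∀ u w, h 0 u w = if w = u then 1 else 0)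
    (hrec : ∀ ℓ u w, h (ℓ + 1) u w =
      ∑ v ∈ Finset.univ.filter (fun v => w ∈ I v),
        (Real.sqrt c / (I v).card) * h ℓ u v)
    (u v : V) (η : V → ℝ) (hη : ∀ w, 0 ≤ η w ∧ η w ≤ 1)
    (εh : ℝ) (hεh0 : 0 < εh) (hεh1 : εh ≤ 1) :
    Summable (fun ℓ : ℕ => ∑ w, h ℓ u w * η w * h ℓ v w) ∧
    Summable (fun ℓ : ℕ => ∑ w ∈ Finset.univ.filter (fun w => εh ≤ h ℓ u w),
        h ℓ u w * η w * h ℓ v w) ∧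
    (∑' ℓ : ℕ, ∑ w, h ℓ u w * η w * h ℓ v w) -
        Real.sqrt c * εh / (1 - Real.sqrt c) ≤
      ∑' ℓ : ℕ, ∑ w ∈ Finset.univ.filter (fun w => εh ≤ h ℓ u w),
        h ℓ u w * η w * h ℓ v w ∧
    (∑' ℓ : ℕ, ∑ w ∈ Finset.univ.filter (fun w => εh ≤ h ℓ u w),
        h ℓ u w * η w * h ℓ v w) ≤
      ∑' ℓ : ℕ, ∑ w, h ℓ u w * η w * h ℓ v w :=
  stmt_8_general I c hc1 h h0 hrec u v η hη εh hεh0 hεh1
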